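/- Let U_D^V and U_D^K be J × J real matrices and define the global attention map G on J × N real matrices by G(D) = U_D^V D (U_D^K D)^T D. Let Π be a J × J permutation matrix satisfying Π U_D^K = U_D^K Π and Π U_D^V = U_D^V Π. Then for every N × N permutation matrix Π_B and every J × N matrix D, G(Πᵀ D Π_B) = Πᵀ G(D) Π_B. -/
import Mathlib

open Matrix
open scoped Kronecker

noncomputable section

/-- The permutation matrix of a permutation `σ`: entry `(i, j)` is `1` iff `σ i = j`. -/
def permMatrix {I : Type*} [DecidableEq I] (σ : Equiv.Perm I) : Matrix I I ℝ :=
  Matrix.of fun i j => if σ i = j then 1 else 0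

/-- The global attention map `G(D) = U_D^V D (U_D^K D)ᵀ D`. -/
def globalAtt {J N : ℕ} (UDV UDK : Matrix (Fin J) (Fin J) ℝ)
    (D : Matrix (Fin J) (Fin N) ℝ) : Matrix (Fin J) (Fin N) ℝ :=
  UDV * D * ((UDK * D)ᵀ * D)

lemma permMatrix_transpose {I : Type*} [DecidableEq I] (σ : Equiv.Perm I) :
    (permMatrix σ)ᵀ = permMatrix σ⁻¹ := by
  ext i j
  simp only [transpose_apply, permMatrix, of_apply, Equiv.Perm.inv_def]
  exact if_congr (by rw [Equiv.symm_apply_eq, eq_comm]) rfl rfl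

lemma permMatrix_mul_transpose {I : Type*} [DecidableEq I] [Fintype I] (σ : Equiv.Perm I) :
    permMatrix σ * (permMatrix σ)ᵀ = 1 := by
  ext i j
  simp only [mul_apply, permMatrix, transpose_apply, of_apply, ite_mul, one_mul, zero_mul]
  rw [Finset.sum_ite_eq (Finset.univ) (σ i) (fun k => if σ j = k then (1:ℝ) else 0)]
  simp [Matrix.one_apply, EmbeddingLike.apply_eq_iff_eq, eq_comm]

lemma transpose_mul_permMatrix {I : Type*} [DecidableEq I] [Fintype I] (σ : Equiv.Perm I) :
    (permMatrix σ)ᵀ * permMatrix σ = 1 := by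
  rw [permMatrix_transpose]
  have := permMatrix_mul_transpose σ⁻¹
  rwa [permMatrix_transpose, inv_inv] at this

lemma permMatrix_cancel {I : Type*} [DecidableEq I] [Fintype I] {m : Type*}
    (σ : Equiv.Perm I) (X : Matrix I m ℝ) :
    permMatrix σ * ((permMatrix σ)ᵀ * X) = X := by
  rw [← Matrix.mul_assoc, permMatrix_mul_transpose, Matrix.one_mul]

lemma permMatrix_cancel' {I : Type*} [DecidableEq I] [Fintype I] {m : Type*}
    (σ : Equiv.Perm I) (X : Matrix I m ℝ) :
    (permMatrix σ)ᵀ * (permMatrix σ * X) = X := by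
  rw [← Matrix.mul_assoc, transpose_mul_permMatrix, Matrix.one_mul]

/-- If the weight matrices commute with the permutation matrix `Π`, then the global
attention map satisfies `G(Πᵀ D Π_B) = Πᵀ G(D) Π_B`. -/
theorem globalAtt_indTwoPE {J N : ℕ} (UDV UDK : Matrix (Fin J) (Fin J) ℝ)
    (π : Equiv.Perm (Fin J))
    (hK : permMatrix π * UDK = UDK * permMatrix π)
    (hV : permMatrix π * UDV = UDV * permMatrix π)
    (σB : Equiv.Perm (Fin N)) (D : Matrix (Fin J) (Fin N) ℝ) :
    globalAtt UDV UDK ((permMatrix π)ᵀ * D * permMatrix σB)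
      = (permMatrix π)ᵀ * globalAtt UDV UDK D * permMatrix σB := by
  set P := permMatrix π with hP
  set Q := permMatrix σB with hQ
  have comm : ∀ U : Matrix (Fin J) (Fin J) ℝ, P * U = U * P → U * Pᵀ = Pᵀ * U := by
    intro U h
    calc U * Pᵀ = Pᵀ * P * U * Pᵀ := by rw [transpose_mul_permMatrix, one_mul]
    _ = Pᵀ * (P * U) * Pᵀ := by simp only [Matrix.mul_assoc]
    _ = Pᵀ * (U * P) * Pᵀ := by rw [h]
    _ = Pᵀ * U * (P * Pᵀ) := by rw [Matrix.mul_assoc, Matrix.mul_assoc, Matrix.mul_assoc]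
    _ = Pᵀ * U := by rw [permMatrix_mul_transpose, mul_one]
  have hK' := comm UDK hK
  have hV' := comm UDV hV
  unfold globalAtt
  have e1 : UDK * (Pᵀ * D * Q) = Pᵀ * (UDK * D) * Q := by
    rw [← Matrix.mul_assoc, ← Matrix.mul_assoc, hK', Matrix.mul_assoc Pᵀ UDK D]
  have e2 : UDV * (Pᵀ * D * Q) = Pᵀ * (UDV * D) * Q := by
    rw [← Matrix.mul_assoc, ← Matrix.mul_assoc, hV', Matrix.mul_assoc Pᵀ UDV D]
  rw [e1, e2, transpose_mul, transpose_mul, transpose_transpose]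
  simp only [Matrix.mul_assoc]
  rw [hP, hQ]
  simp only [permMatrix_cancel]
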